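/- arXiv:0908.2359 — 4 statements merged into one kernel-verified Lean document; each statement's English description precedes it below -/
import Mathlib

section
/- EM monotonicity (finite latent variable version): let X be a finite set, Θ a type, and p : Θ → X → ℝ a family of strictly positive joint weights with marginal ℓ(θ) = ∑_x p(θ)(x). Define Q(θ, θ') = ∑_x (p(θ)(x)/ℓ(θ)) · log p(θ')(x). If Q(θ, θ') ≥ Q(θ, θ), then log ℓ(θ') ≥ log ℓ(θ). -/
/-! `Q(θ, θ') - Q(θ, θ)` is the posterior expectation of `log (p θ' / p θ)`, and by Jensen's
inequality for the concave `log` it is at most the log of the posterior expectation of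
`p θ' / p θ`, which is `log (ℓ θ' / ℓ θ)`. -/

open Finset Real

lemma Real.sum_mul_log_le_log_sum_mul {ι : Type*} (s : Finset ι) {w a : ι → ℝ}
    (hw : ∀ i ∈ s, 0 ≤ w i) (hw₁ : ∑ i ∈ s, w i = 1) (ha : ∀ i ∈ s, 0 < a i) :
    ∑ i ∈ s, w i * log (a i) ≤ log (∑ i ∈ s, w i * a i) :=
  strictConcaveOn_log_Ioi.concaveOn.le_map_sum hw hw₁ ha

lemma sum_div_sum_mul_log_sub_le_log_sum_sub_log_sum {X : Type*} [Fintype X] [Nonempty X]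
    {p q : X → ℝ} (hp : ∀ x, 0 < p x) (hq : ∀ x, 0 < q x) :
    ∑ x, (p x / ∑ y, p y) * log (q x) - ∑ x, (p x / ∑ y, p y) * log (p x)
      ≤ log (∑ x, q x) - log (∑ x, p x) := by
  have hP : 0 < ∑ y, p y := sum_pos (fun x _ ↦ hp x) univ_nonempty
  have hQ : 0 < ∑ y, q y := sum_pos (fun x _ ↦ hq x) univ_nonempty
  have hw₁ : ∑ x, p x / ∑ y, p y = 1 := by rw [← sum_div, div_self hP.ne']
  calc ∑ x, (p x / ∑ y, p y) * log (q x) - ∑ x, (p x / ∑ y, p y) * log (p x)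
      = ∑ x, (p x / ∑ y, p y) * log (q x / p x) := by
        rw [← sum_sub_distrib]
        refine sum_congr rfl fun x _ ↦ ?_
        rw [log_div (hq x).ne' (hp x).ne']
        ring
    _ ≤ log (∑ x, (p x / ∑ y, p y) * (q x / p x)) :=
        sum_mul_log_le_log_sum_mul univ (fun x _ ↦ (div_pos (hp x) hP).le) hw₁
          (fun x _ ↦ div_pos (hq x) (hp x))
    _ = log (∑ x, q x) - log (∑ x, p x) := by
        rw [← log_div hQ.ne' hP.ne', sum_div]
        refine congrArg log (sum_congr rfl fun x _ ↦ ?_)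
        field_simp [(hp x).ne']

theorem stmt5 {X : Type*} [Fintype X] [Nonempty X] {Θ : Type*}
    (p : Θ → X → ℝ) (hp : ∀ θ x, 0 < p θ x) (θ θ' : Θ)
    (h : (∑ x, (p θ x / ∑ x', p θ x') * Real.log (p θ' x))
        ≥ ∑ x, (p θ x / ∑ x', p θ x') * Real.log (p θ x)) :
    Real.log (∑ x, p θ' x) ≥ Real.log (∑ x, p θ x) := by
  have := sum_div_sum_mul_log_sub_le_log_sum_sub_log_sum (hp θ) (hp θ')
  linarith
end

section
/- Backward retrospective probability formula: with the finite-state HMM path-weight model, P(X_n = x' | X_{n+1} = x, Y_{0:n}) = φ_n(x') q(x',x) / ∑_{x''} φ_n(x'') q(x'',x), where φ_n is the filter at time n; in particular this conditional probability does not depend on the observation y_{n+1}. -/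
open Finset

/-- Joint weight of a state path `x_{0:n}` of a finite-state HMM. -/
noncomputable def hmmWeight {S Y : Type*} [Fintype S] (ν : S → ℝ) (q : S → S → ℝ)
    (g : S → Y → ℝ) (y : ℕ → Y) (n : ℕ) (x : Fin (n + 1) → S) : ℝ :=
  ν (x 0) * g (x 0) (y 0) *
    ∏ t : Fin n, (q (x t.castSucc) (x t.succ) * g (x t.succ) (y ((t : ℕ) + 1)))

/-- The filter `φ_n(s) = P(X_n = s | Y_{0:n})`. -/
noncomputable def hmmFilter {S Y : Type*} [Fintype S] [DecidableEq S] (ν : S → ℝ)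
    (q : S → S → ℝ) (g : S → Y → ℝ) (y : ℕ → Y) (n : ℕ) (s : S) : ℝ :=
  (∑ x : Fin (n + 1) → S, if x (Fin.last n) = s then hmmWeight ν q g y n x else 0) /
    (∑ x : Fin (n + 1) → S, hmmWeight ν q g y n x)

/-- Backward retrospective probability:
`P(X_n = x' | X_{n+1} = x, Y_{0:n}) = φ_n(x') q(x',x) / ∑_{x''} φ_n(x'') q(x'',x)`;
in particular it does not depend on the observation `y_{n+1}`. -/
theorem stmt11 {S Y : Type*} [Fintype S] [DecidableEq S] [Nonempty S]
    (ν : S → ℝ) (q : S → S → ℝ) (g : S → Y → ℝ) (y : ℕ → Y)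
    (hν : ∀ x, 0 < ν x) (hνs : ∑ x, ν x = 1)
    (hq : ∀ x x', 0 < q x x') (hqs : ∀ x, ∑ x', q x x' = 1)
    (hg : ∀ x yy, 0 < g x yy)
    (n : ℕ) (x x' : S) :
    (∑ p : Fin (n + 1) → S,
        if p (Fin.last n) = x' then hmmWeight ν q g y n p else 0) * q x' x /
      (∑ p : Fin (n + 1) → S, hmmWeight ν q g y n p * q (p (Fin.last n)) x) =
    hmmFilter ν q g y n x' * q x' x /
      (∑ x'' : S, hmmFilter ν q g y n x'' * q x'' x) := by
  have hwpos : ∀ p : Fin (n + 1) → S, 0 < hmmWeight ν q g y n p := fun p =>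
    mul_pos (mul_pos (hν _) (hg _ _))
      (Finset.prod_pos fun t _ => mul_pos (hq _ _) (hg _ _))
  set A : S → ℝ := fun s =>
    ∑ p : Fin (n + 1) → S, if p (Fin.last n) = s then hmmWeight ν q g y n p else 0 with hA
  set W : ℝ := ∑ p : Fin (n + 1) → S, hmmWeight ν q g y n p with hW
  have hWpos : 0 < W := Finset.sum_pos (fun p _ => hwpos p) Finset.univ_nonempty
  have hWne : W ≠ 0 := ne_of_gt hWpos
  have hfilter : ∀ s, hmmFilter ν q g y n s = A s / W := fun s => rfl
  have hden : (∑ p : Fin (n + 1) → S, hmmWeight ν q g y n p * q (p (Fin.last n)) x)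
      = ∑ x'' : S, A x'' * q x'' x := by
    simp only [hA, Finset.sum_mul, ite_mul, zero_mul]
    rw [Finset.sum_comm]
    refine Finset.sum_congr rfl fun p _ => ?_
    simp [Finset.sum_ite_eq]
  have hApos : ∀ s, 0 < A s := fun s => by
    rw [hA]
    refine Finset.sum_pos' (fun p _ => by split_ifs <;> simp [(hwpos _).le]) ?_
    refine ⟨fun _ => s, Finset.mem_univ _, ?_⟩
    simp [hwpos]
  have hDpos : 0 < ∑ x'' : S, A x'' * q x'' x :=
    Finset.sum_pos (fun x'' _ => mul_pos (hApos x'') (hq _ _)) Finset.univ_nonempty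
  have hAx' : (∑ p : Fin (n + 1) → S,
      if p (Fin.last n) = x' then hmmWeight ν q g y n p else 0) = A x' := rfl
  have hstep : ∀ s : S, A s / W * q s x = A s * q s x / W := fun s =>
    div_mul_eq_mul_div _ _ _
  simp only [hfilter, hden, hAx', hstep, ← Finset.sum_div]
  field_simp
end

section
/- Correctness of the recursive smoothing scheme for sum functionals: define φ_n(x) = P(X_n = x | Y_{0:n}) and ρ_n(x) = (1/n)·E[∑_{t=1}^n s(X_{t-1}, X_t, y_t) | Y_{0:n}, X_n = x] for a function s on S × S and fixed observations. Then ρ satisfies ρ_0 = 0 and ρ_{n+1}(x) = ∑_{x'} [ (1/(n+1))·s(x',x,y_{n+1}) + (1 − 1/(n+1))·ρ_n(x') ] · r_{n+1}(x'|x), where r_{n+1}(x'|x) = φ_n(x')q(x',x)/∑_{x''} φ_n(x'')q(x'',x) is the backward retrospective probability; moreover ∑_x φ_n(x)ρ_n(x) = (1/n)·E[∑_{t=1}^n s(X_{t-1},X_t,y_t) | Y_{0:n}]. -/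
set_option linter.unusedSectionVars false

open Finset

/-- The auxiliary smoothing functional
`ρ_n(x) = (1/n) E[∑_{t=1}^n s(X_{t-1}, X_t, y_t) | Y_{0:n}, X_n = x]`. -/
noncomputable def hmmRho {S Y : Type*} [Fintype S] [DecidableEq S] (ν : S → ℝ)
    (q : S → S → ℝ) (g : S → Y → ℝ) (y : ℕ → Y) (s : S → S → Y → ℝ)
    (n : ℕ) (x : S) : ℝ :=
  (1 / (n : ℝ)) *
    (∑ p : Fin (n + 1) → S,
      if p (Fin.last n) = x then
        hmmWeight ν q g y n p *
          ∑ t : Fin n, s (p t.castSucc) (p t.succ) (y ((t : ℕ) + 1))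
      else 0) /
    (∑ p : Fin (n + 1) → S, if p (Fin.last n) = x then hmmWeight ν q g y n p else 0)

section Aux

variable {S Y : Type*} [Fintype S] [DecidableEq S]

/-- unnormalized filter -/
noncomputable def auxA (ν : S → ℝ) (q : S → S → ℝ) (g : S → Y → ℝ) (y : ℕ → Y)
    (n : ℕ) (x : S) : ℝ :=
  ∑ p : Fin (n + 1) → S, if p (Fin.last n) = x then hmmWeight ν q g y n p else 0

/-- unnormalized smoothed statistic -/
noncomputable def auxB (ν : S → ℝ) (q : S → S → ℝ) (g : S → Y → ℝ) (y : ℕ → Y)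
    (s : S → S → Y → ℝ) (n : ℕ) (x : S) : ℝ :=
  ∑ p : Fin (n + 1) → S,
    if p (Fin.last n) = x then
      hmmWeight ν q g y n p *
        ∑ t : Fin n, s (p t.castSucc) (p t.succ) (y ((t : ℕ) + 1))
    else 0

lemma rho_eq (ν : S → ℝ) (q : S → S → ℝ) (g : S → Y → ℝ) (y : ℕ → Y)
    (s : S → S → Y → ℝ) (n : ℕ) (x : S) :
    hmmRho ν q g y s n x = (1 / (n : ℝ)) * auxB ν q g y s n x / auxA ν q g y n x := rfl

lemma hmmWeight_snoc (ν : S → ℝ) (q : S → S → ℝ)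
    (g : S → Y → ℝ) (y : ℕ → Y) (n : ℕ) (p : Fin (n+1) → S) (x : S) :
    hmmWeight ν q g y (n+1) (Fin.snoc p x) =
      hmmWeight ν q g y n p * (q (p (Fin.last n)) x * g x (y (n + 1))) := by
  unfold hmmWeight
  rw [Fin.prod_univ_castSucc]
  have h0 : (Fin.snoc p x : Fin (n+2) → S) 0 = p 0 := by
    have : (0 : Fin (n+2)) = Fin.castSucc 0 := rfl
    rw [this, Fin.snoc_castSucc]
  have hfac : ∀ t : Fin n,
      q ((Fin.snoc p x : Fin (n+2) → S) t.castSucc.castSucc)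
          ((Fin.snoc p x : Fin (n+2) → S) t.castSucc.succ) *
        g ((Fin.snoc p x : Fin (n+2) → S) t.castSucc.succ) (y ((t.castSucc : ℕ) + 1)) =
      q (p t.castSucc) (p t.succ) * g (p t.succ) (y ((t : ℕ) + 1)) := by
    intro t
    rw [Fin.succ_castSucc, Fin.snoc_castSucc, Fin.snoc_castSucc]
    rfl
  rw [Finset.prod_congr rfl (fun t _ => hfac t), h0]
  have hlast : (Fin.last n).succ = Fin.last (n+1) := rfl
  rw [hlast, Fin.snoc_last, Fin.snoc_castSucc]
  have : ((Fin.last n : Fin (n+1)) : ℕ) = n := rfl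
  rw [this]
  ring

lemma hmmSum_snoc (y : ℕ → Y) (s : S → S → Y → ℝ) (n : ℕ) (p : Fin (n+1) → S) (x : S) :
    (∑ t : Fin (n+1), s ((Fin.snoc p x : Fin (n+2) → S) t.castSucc)
        ((Fin.snoc p x : Fin (n+2) → S) t.succ) (y ((t : ℕ) + 1))) =
      (∑ t : Fin n, s (p t.castSucc) (p t.succ) (y ((t : ℕ) + 1))) +
        s (p (Fin.last n)) x (y (n + 1)) := by
  rw [Fin.sum_univ_castSucc]
  have hfac : ∀ t : Fin n,
      s ((Fin.snoc p x : Fin (n+2) → S) t.castSucc.castSucc)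
          ((Fin.snoc p x : Fin (n+2) → S) t.castSucc.succ) (y ((t.castSucc : ℕ) + 1)) =
      s (p t.castSucc) (p t.succ) (y ((t : ℕ) + 1)) := by
    intro t
    rw [Fin.succ_castSucc, Fin.snoc_castSucc, Fin.snoc_castSucc]
    rfl
  rw [Finset.sum_congr rfl (fun t _ => hfac t)]
  have hlast : (Fin.last n).succ = Fin.last (n+1) := rfl
  rw [hlast, Fin.snoc_last, Fin.snoc_castSucc]
  rfl

/-- Equiv used for path decomposition. -/
def snocEquiv (S : Type*) (n : ℕ) : ((Fin (n+1) → S) × S) ≃ (Fin (n+2) → S) where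
  toFun px := Fin.snoc px.1 px.2
  invFun f := (Fin.init f, f (Fin.last (n+1)))
  left_inv := by
    rintro ⟨p, x⟩
    simp [Fin.init_snoc, Fin.snoc_last]
  right_inv := by
    intro f
    simp [Fin.snoc_init_self]

lemma sum_snoc {n : ℕ} (F : (Fin (n+2) → S) → ℝ) :
    ∑ f : Fin (n+2) → S, F f = ∑ p : Fin (n+1) → S, ∑ x : S, F (Fin.snoc p x) := by
  have h := Fintype.sum_equiv (snocEquiv S n) (fun px => F (Fin.snoc px.1 px.2)) F
    (fun _ => rfl)
  rw [← h, Fintype.sum_prod_type]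

lemma group_last {n : ℕ} (F : (Fin (n+1) → S) → ℝ) :
    ∑ p : Fin (n+1) → S, F p =
      ∑ x : S, ∑ p : Fin (n+1) → S, if p (Fin.last n) = x then F p else 0 := by
  rw [Finset.sum_comm]
  apply Finset.sum_congr rfl
  intro p _
  simp

lemma hmmFilter_eq (ν : S → ℝ) (q : S → S → ℝ) (g : S → Y → ℝ) (y : ℕ → Y) (n : ℕ) (x : S) :
    hmmFilter ν q g y n x = auxA ν q g y n x / ∑ x' : S, auxA ν q g y n x' := by
  rw [hmmFilter, group_last (F := hmmWeight ν q g y n)]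
  rfl

lemma hmmWeight_pos (ν : S → ℝ) (q : S → S → ℝ) (g : S → Y → ℝ) (y : ℕ → Y)
    (hν : ∀ x, 0 < ν x) (hq : ∀ x x', 0 < q x x') (hg : ∀ x yy, 0 < g x yy)
    (n : ℕ) (p : Fin (n+1) → S) : 0 < hmmWeight ν q g y n p := by
  unfold hmmWeight
  exact mul_pos (mul_pos (hν _) (hg _ _))
    (Finset.prod_pos fun t _ => mul_pos (hq _ _) (hg _ _))

lemma auxA_pos (ν : S → ℝ) (q : S → S → ℝ) (g : S → Y → ℝ) (y : ℕ → Y)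
    (hν : ∀ x, 0 < ν x) (hq : ∀ x x', 0 < q x x') (hg : ∀ x yy, 0 < g x yy)
    (n : ℕ) (x : S) : 0 < auxA ν q g y n x := by
  apply Finset.sum_pos'
  · intro p _
    split
    · exact (hmmWeight_pos ν q g y hν hq hg n p).le
    · exact le_rfl
  · refine ⟨fun _ => x, Finset.mem_univ _, ?_⟩
    rw [if_pos rfl]
    exact hmmWeight_pos ν q g y hν hq hg n _

lemma auxB_zero (ν : S → ℝ) (q : S → S → ℝ) (g : S → Y → ℝ) (y : ℕ → Y)
    (s : S → S → Y → ℝ) (x : S) : auxB ν q g y s 0 x = 0 := by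
  unfold auxB
  simp

lemma auxA_succ (ν : S → ℝ) (q : S → S → ℝ) (g : S → Y → ℝ) (y : ℕ → Y) (n : ℕ) (x : S) :
    auxA ν q g y (n+1) x =
      (∑ x' : S, auxA ν q g y n x' * q x' x) * g x (y (n+1)) := by
  unfold auxA
  rw [sum_snoc]
  have h1 : ∀ p : Fin (n+1) → S,
      (∑ x₁ : S, if (Fin.snoc p x₁ : Fin (n+2) → S) (Fin.last (n+1)) = x then
          hmmWeight ν q g y (n+1) (Fin.snoc p x₁) else 0) =
      hmmWeight ν q g y n p * (q (p (Fin.last n)) x * g x (y (n+1))) := by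
    intro p
    have h : ∀ x₁ : S,
        (if (Fin.snoc p x₁ : Fin (n+2) → S) (Fin.last (n+1)) = x then
          hmmWeight ν q g y (n+1) (Fin.snoc p x₁) else 0) =
        (if x₁ = x then hmmWeight ν q g y n p * (q (p (Fin.last n)) x₁ * g x₁ (y (n+1)))
          else 0) := by
      intro x₁
      rw [Fin.snoc_last, hmmWeight_snoc]
    rw [Finset.sum_congr rfl (fun x₁ _ => h x₁), Finset.sum_ite_eq' Finset.univ x]
    simp
  rw [Finset.sum_congr rfl (fun p _ => h1 p),
    group_last (F := fun p => hmmWeight ν q g y n p * (q (p (Fin.last n)) x * g x (y (n+1))))]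
  have h2 : ∀ x' : S,
      (∑ p : Fin (n+1) → S, if p (Fin.last n) = x' then
          hmmWeight ν q g y n p * (q (p (Fin.last n)) x * g x (y (n+1))) else 0) =
      auxA ν q g y n x' * (q x' x * g x (y (n+1))) := by
    intro x'
    unfold auxA
    rw [Finset.sum_mul]
    apply Finset.sum_congr rfl
    intro p _
    split_ifs with h
    · rw [h]
    · simp
  rw [Finset.sum_congr rfl (fun x' _ => h2 x'), Finset.sum_mul]
  exact Finset.sum_congr rfl fun x' _ => by simp only [auxA]; ring

lemma auxB_succ (ν : S → ℝ) (q : S → S → ℝ) (g : S → Y → ℝ) (y : ℕ → Y)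
    (s : S → S → Y → ℝ) (n : ℕ) (x : S) :
    auxB ν q g y s (n+1) x =
      (∑ x' : S, (auxB ν q g y s n x' + auxA ν q g y n x' * s x' x (y (n+1))) * q x' x) *
        g x (y (n+1)) := by
  unfold auxB
  rw [sum_snoc]
  have h1 : ∀ p : Fin (n+1) → S,
      (∑ x₁ : S, if (Fin.snoc p x₁ : Fin (n+2) → S) (Fin.last (n+1)) = x then
          hmmWeight ν q g y (n+1) (Fin.snoc p x₁) *
            ∑ t : Fin (n+1), s ((Fin.snoc p x₁ : Fin (n+2) → S) t.castSucc)
              ((Fin.snoc p x₁ : Fin (n+2) → S) t.succ) (y ((t : ℕ) + 1)) else 0) =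
      hmmWeight ν q g y n p * (q (p (Fin.last n)) x * g x (y (n+1))) *
        ((∑ t : Fin n, s (p t.castSucc) (p t.succ) (y ((t : ℕ) + 1))) +
          s (p (Fin.last n)) x (y (n+1))) := by
    intro p
    have h : ∀ x₁ : S,
        (if (Fin.snoc p x₁ : Fin (n+2) → S) (Fin.last (n+1)) = x then
          hmmWeight ν q g y (n+1) (Fin.snoc p x₁) *
            ∑ t : Fin (n+1), s ((Fin.snoc p x₁ : Fin (n+2) → S) t.castSucc)
              ((Fin.snoc p x₁ : Fin (n+2) → S) t.succ) (y ((t : ℕ) + 1)) else 0) =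
        (if x₁ = x then
          hmmWeight ν q g y n p * (q (p (Fin.last n)) x₁ * g x₁ (y (n+1))) *
            ((∑ t : Fin n, s (p t.castSucc) (p t.succ) (y ((t : ℕ) + 1))) +
              s (p (Fin.last n)) x₁ (y (n+1))) else 0) := by
      intro x₁
      rw [Fin.snoc_last, hmmWeight_snoc, hmmSum_snoc]
    rw [Finset.sum_congr rfl (fun x₁ _ => h x₁), Finset.sum_ite_eq' Finset.univ x]
    simp
  rw [Finset.sum_congr rfl (fun p _ => h1 p),
    group_last (F := fun p => hmmWeight ν q g y n p * (q (p (Fin.last n)) x * g x (y (n+1))) *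
      ((∑ t : Fin n, s (p t.castSucc) (p t.succ) (y ((t : ℕ) + 1))) +
        s (p (Fin.last n)) x (y (n+1))))]
  have h2 : ∀ x' : S,
      (∑ p : Fin (n+1) → S, if p (Fin.last n) = x' then
          hmmWeight ν q g y n p * (q (p (Fin.last n)) x * g x (y (n+1))) *
            ((∑ t : Fin n, s (p t.castSucc) (p t.succ) (y ((t : ℕ) + 1))) +
              s (p (Fin.last n)) x (y (n+1))) else 0) =
      auxB ν q g y s n x' * (q x' x * g x (y (n+1))) +
        auxA ν q g y n x' * (s x' x (y (n+1)) * (q x' x * g x (y (n+1)))) := by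
    intro x'
    unfold auxA auxB
    rw [Finset.sum_mul, Finset.sum_mul, ← Finset.sum_add_distrib]
    apply Finset.sum_congr rfl
    intro p _
    split_ifs with h
    · rw [h]; ring
    · simp
  rw [Finset.sum_congr rfl (fun x' _ => h2 x'), Finset.sum_mul]
  exact Finset.sum_congr rfl fun x' _ => by simp only [auxA, auxB]; ring

lemma key_scalar (n : ℕ) (B : ℝ) (hB : n = 0 → B = 0) :
    (1 - 1 / ((n : ℝ) + 1)) * ((1 / (n : ℝ)) * B) = (1 / ((n : ℝ) + 1)) * B := by
  rcases n with _ | m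
  · simp [hB rfl]
  · have h1 : ((m : ℝ) + 1) ≠ 0 := by positivity
    have h2 : ((m : ℝ) + 1 + 1) ≠ 0 := by positivity
    push_cast
    field_simp
    ring

end Aux

/-- Correctness of the recursive smoothing scheme for sum functionals. -/
theorem stmt12 {S Y : Type*} [Fintype S] [DecidableEq S] [Nonempty S]
    (ν : S → ℝ) (q : S → S → ℝ) (g : S → Y → ℝ) (y : ℕ → Y) (s : S → S → Y → ℝ)
    (hν : ∀ x, 0 < ν x) (hνs : ∑ x, ν x = 1)
    (hq : ∀ x x', 0 < q x x') (hqs : ∀ x, ∑ x', q x x' = 1)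
    (hg : ∀ x yy, 0 < g x yy) :
    (∀ x : S, hmmRho ν q g y s 0 x = 0) ∧
    (∀ (n : ℕ) (x : S),
      hmmRho ν q g y s (n + 1) x =
        ∑ x' : S,
          ((1 / ((n : ℝ) + 1)) * s x' x (y (n + 1)) +
              (1 - 1 / ((n : ℝ) + 1)) * hmmRho ν q g y s n x') *
            (hmmFilter ν q g y n x' * q x' x /
              ∑ x'' : S, hmmFilter ν q g y n x'' * q x'' x)) ∧
    ∀ n : ℕ,
      (∑ x : S, hmmFilter ν q g y n x * hmmRho ν q g y s n x) =
        (1 / (n : ℝ)) *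
          (∑ p : Fin (n + 1) → S,
            hmmWeight ν q g y n p *
              ∑ t : Fin n, s (p t.castSucc) (p t.succ) (y ((t : ℕ) + 1))) /
          (∑ p : Fin (n + 1) → S, hmmWeight ν q g y n p) := by
  have hA : ∀ (n : ℕ) (x : S), 0 < auxA ν q g y n x := auxA_pos ν q g y hν hq hg
  have hAne : ∀ (n : ℕ) (x : S), auxA ν q g y n x ≠ 0 := fun n x => (hA n x).ne'
  refine ⟨?_, ?_, ?_⟩
  · intro x
    rw [rho_eq]
    simp
  · intro n x
    have hZ : (0:ℝ) < ∑ x' : S, auxA ν q g y n x' :=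
      Finset.sum_pos (fun x' _ => hA n x') Finset.univ_nonempty
    have hD : (0:ℝ) < ∑ x'' : S, auxA ν q g y n x'' * q x'' x :=
      Finset.sum_pos (fun x'' _ => mul_pos (hA n x'') (hq x'' x)) Finset.univ_nonempty
    have hG : g x (y (n+1)) ≠ 0 := (hg x (y (n+1))).ne'
    have hn1 : ((n : ℝ) + 1) ≠ 0 := by positivity
    have hfil : ∀ x' : S, hmmFilter ν q g y n x' * q x' x /
        (∑ x'' : S, hmmFilter ν q g y n x'' * q x'' x) =
        auxA ν q g y n x' * q x' x / (∑ x'' : S, auxA ν q g y n x'' * q x'' x) := by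
      intro x'
      simp only [hmmFilter_eq]
      rw [show (∑ x'' : S, auxA ν q g y n x'' / (∑ x₀ : S, auxA ν q g y n x₀) * q x'' x) =
          (∑ x'' : S, auxA ν q g y n x'' * q x'' x) / (∑ x₀ : S, auxA ν q g y n x₀) by
        rw [Finset.sum_div]
        exact Finset.sum_congr rfl fun x'' _ => by ring]
      rw [div_mul_eq_mul_div, div_div_div_cancel_right₀]
      exact hZ.ne'
    have hterm : ∀ x' : S,
        ((1 / ((n : ℝ) + 1)) * s x' x (y (n + 1)) +
            (1 - 1 / ((n : ℝ) + 1)) * hmmRho ν q g y s n x') *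
          (hmmFilter ν q g y n x' * q x' x /
            ∑ x'' : S, hmmFilter ν q g y n x'' * q x'' x) =
        (1 / ((n : ℝ) + 1)) *
          ((auxB ν q g y s n x' + auxA ν q g y n x' * s x' x (y (n+1))) * q x' x) /
          (∑ x'' : S, auxA ν q g y n x'' * q x'' x) := by
      intro x'
      rw [hfil, rho_eq,
        show (1 - 1 / ((n : ℝ) + 1)) *
            (1 / (n : ℝ) * auxB ν q g y s n x' / auxA ν q g y n x') =
          (1 / ((n : ℝ) + 1)) * auxB ν q g y s n x' / auxA ν q g y n x' from by
          rw [← mul_div_assoc, key_scalar n (auxB ν q g y s n x')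
            (fun h => by subst h; exact auxB_zero ν q g y s x')]]
      rw [← mul_div_assoc]
      congr 1
      field_simp [hAne n x', hn1]
      ring
    rw [Finset.sum_congr rfl (fun x' _ => hterm x'), rho_eq, auxB_succ, auxA_succ,
      ← Finset.sum_div, ← Finset.mul_sum]
    push_cast
    rw [div_eq_div_iff (by exact mul_ne_zero hD.ne' hG) hD.ne']
    ring
  · intro n
    have hZ : (0:ℝ) < ∑ x' : S, auxA ν q g y n x' :=
      Finset.sum_pos (fun x' _ => hA n x') Finset.univ_nonempty
    have hterm : ∀ x : S, hmmFilter ν q g y n x * hmmRho ν q g y s n x =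
        (1 / (n : ℝ)) * auxB ν q g y s n x / (∑ x' : S, auxA ν q g y n x') := by
      intro x
      rw [hmmFilter_eq, rho_eq,
        show auxA ν q g y n x / (∑ x' : S, auxA ν q g y n x') *
            (1 / (n : ℝ) * auxB ν q g y s n x / auxA ν q g y n x) =
          auxA ν q g y n x / auxA ν q g y n x *
            (1 / (n : ℝ) * auxB ν q g y s n x / ∑ x' : S, auxA ν q g y n x') from by
          ring,
        div_self (hAne n x), one_mul]
    rw [Finset.sum_congr rfl (fun x _ => hterm x)]
    rw [group_last (F := hmmWeight ν q g y n),
      group_last (F := fun p => hmmWeight ν q g y n p *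
        ∑ t : Fin n, s (p t.castSucc) (p t.succ) (y ((t : ℕ) + 1)))]
    rw [← Finset.sum_div, ← Finset.mul_sum]
    simp only [auxA, auxB]
end

section
/- Geometric decay of initial-condition dependence of finite-horizon smoothed expectations: under the assumptions of the two-sided forgetting bound, for any m ≥ n ≥ 1 and bounded function s on S × S, |E_ν[s(X_{n-1}, X_n) | Y_{0:2n}] − E_{ν'}[s(X_{n-1}, X_n) | Y_{0:2n}]| ≤ (2/ε)·(1−ε)^{n-1}·‖s‖_∞ for any two strictly positive initial laws ν, ν', where the conditional expectation is taken in the finite-state HMM with transition matrix q(x,x') ≥ ε > 0 and positive observation weights, horizon 2n, and the queried pair sits at the midpoint t = n. -/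
open Finset

section Aux
set_option linter.unusedSectionVars false
variable {S Y : Type*} [Fintype S] [Nonempty S]


noncomputable def Bfun (q : S → S → ℝ) (g : S → Y → ℝ) : ℕ → (ℕ → Y) → S → ℝ
  | 0, _, _ => 1
  | (m+1), y, x => ∑ x' : S, q x x' * g x' (y 1) * Bfun q g m (fun i => y (i+1)) x'

noncomputable def Bs (q : S → S → ℝ) (g : S → Y → ℝ) (s : S → S → ℝ) :
    ℕ → ℕ → (ℕ → Y) → S → ℝ
  | 0, r, y, x => ∑ x' : S, q x x' * g x' (y 1) * s x x' * Bfun q g r (fun i => y (i+1)) x'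
  | (k+1), r, y, x => ∑ x' : S, q x x' * g x' (y 1) * Bs q g s k r (fun i => y (i+1)) x'

theorem lemP (q : S → S → ℝ) (g : S → Y → ℝ) :
    ∀ (m : ℕ) (y : ℕ → Y) (φ : S → ℝ),
    ∑ p : Fin (m+1) → S, φ (p 0) *
      ∏ t : Fin m, (q (p t.castSucc) (p t.succ) * g (p t.succ) (y ((t : ℕ) + 1)))
    = ∑ x : S, φ x * Bfun q g m y x := by
  intro m
  induction m with
  | zero =>
    intro y φ
    rw [Fintype.sum_equiv (Equiv.funUnique (Fin 1) S) _ (fun x => φ x * Bfun q g 0 y x)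
      (fun p => by simp [Bfun, Equiv.funUnique])]
  | succ m ih =>
    intro y φ
    rw [← Fintype.sum_equiv (Fin.consEquiv (fun _ : Fin (m+2) => S))
      (fun xp : S × (Fin (m+1) → S) =>
        φ ((Fin.cons xp.1 xp.2 : Fin (m+2) → S) 0) *
        ∏ t : Fin (m+1), (q ((Fin.cons xp.1 xp.2 : Fin (m+2) → S) t.castSucc)
          ((Fin.cons xp.1 xp.2 : Fin (m+2) → S) t.succ) *
          g ((Fin.cons xp.1 xp.2 : Fin (m+2) → S) t.succ) (y ((t : ℕ) + 1))))
      _ (fun xp => rfl)]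
    rw [Fintype.sum_prod_type]
    have inner : ∀ x0 : S,
        (∑ p' : Fin (m+1) → S,
          φ ((Fin.cons x0 p' : Fin (m+2) → S) 0) *
          ∏ t : Fin (m+1), (q ((Fin.cons x0 p' : Fin (m+2) → S) t.castSucc)
            ((Fin.cons x0 p' : Fin (m+2) → S) t.succ) *
            g ((Fin.cons x0 p' : Fin (m+2) → S) t.succ) (y ((t : ℕ) + 1))))
        = ∑ z : S, (φ x0 * (q x0 z * g z (y 1))) * Bfun q g m (fun i => y (i+1)) z := by
      intro x0
      rw [← ih (fun i => y (i+1)) (fun z => φ x0 * (q x0 z * g z (y 1)))]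
      refine Finset.sum_congr rfl fun p' _ => ?_
      rw [Fin.prod_univ_succ]
      simp only [← Fin.succ_castSucc, Fin.cons_succ, Fin.cons_zero, Fin.castSucc_zero,
        Fin.val_succ, Fin.val_zero]
      ring
    rw [Finset.sum_congr rfl fun x0 _ => inner x0]
    simp only [Bfun, Finset.mul_sum]
    refine Finset.sum_congr rfl fun x0 _ => Finset.sum_congr rfl fun z _ => by ring

theorem lemQ (q : S → S → ℝ) (g : S → Y → ℝ) (s : S → S → ℝ) :
    ∀ (k r M : ℕ), M + 1 = k + 1 + r → ∀ (y : ℕ → Y) (φ : S → ℝ)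
      (h1 : k < M + 2) (h2 : k + 1 < M + 2),
    ∑ p : Fin (M+2) → S, φ (p 0) *
      (∏ t : Fin (M+1), (q (p t.castSucc) (p t.succ) * g (p t.succ) (y ((t : ℕ) + 1)))) *
      s (p ⟨k, h1⟩) (p ⟨k+1, h2⟩)
    = ∑ x : S, φ x * Bs q g s k r y x := by
  intro k
  induction k with
  | zero =>
    intro r M hM y φ h1 h2
    obtain rfl : M = r := by omega
    rw [← Fintype.sum_equiv (Fin.consEquiv (fun _ : Fin (M+2) => S))
      (fun xp : S × (Fin (M+1) → S) =>
        (fun p : Fin (M+2) → S => φ (p 0) *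
          (∏ t : Fin (M+1), (q (p t.castSucc) (p t.succ) * g (p t.succ) (y ((t : ℕ) + 1)))) *
          s (p ⟨0, h1⟩) (p ⟨1, h2⟩)) (Fin.cons xp.1 xp.2))
      _ (fun xp => rfl)]
    rw [Fintype.sum_prod_type]
    have inner : ∀ x0 : S,
        (∑ p' : Fin (M+1) → S,
          φ ((Fin.cons x0 p' : Fin (M+2) → S) 0) *
          (∏ t : Fin (M+1), (q ((Fin.cons x0 p' : Fin (M+2) → S) t.castSucc)
            ((Fin.cons x0 p' : Fin (M+2) → S) t.succ) *
            g ((Fin.cons x0 p' : Fin (M+2) → S) t.succ) (y ((t : ℕ) + 1)))) *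
          s ((Fin.cons x0 p' : Fin (M+2) → S) ⟨0, h1⟩)
            ((Fin.cons x0 p' : Fin (M+2) → S) ⟨1, h2⟩))
        = ∑ z : S, (φ x0 * (q x0 z * g z (y 1) * s x0 z)) *
            Bfun q g M (fun i => y (i+1)) z := by
      intro x0
      rw [← lemP q g M (fun i => y (i+1)) (fun z => φ x0 * (q x0 z * g z (y 1) * s x0 z))]
      refine Finset.sum_congr rfl fun p' _ => ?_
      have e0 : (⟨0, h1⟩ : Fin (M+2)) = 0 := rfl
      have e1 : (⟨1, h2⟩ : Fin (M+2)) = (0 : Fin (M+1)).succ := rfl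
      rw [e0, e1, Fin.prod_univ_succ]
      simp only [← Fin.succ_castSucc, Fin.cons_succ, Fin.cons_zero, Fin.castSucc_zero,
        Fin.val_succ, Fin.val_zero]
      ring
    rw [Finset.sum_congr rfl fun x0 _ => inner x0]
    simp only [Bs, Finset.mul_sum]
    refine Finset.sum_congr rfl fun x0 _ => Finset.sum_congr rfl fun z _ => by ring
  | succ k ih =>
    intro r M hM y φ h1 h2
    obtain ⟨M', rfl⟩ : ∃ M', M = M' + 1 := ⟨k + r, by omega⟩
    rw [← Fintype.sum_equiv (Fin.consEquiv (fun _ : Fin (M'+3) => S))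
      (fun xp : S × (Fin (M'+2) → S) =>
        (fun p : Fin (M'+3) → S => φ (p 0) *
          (∏ t : Fin (M'+2), (q (p t.castSucc) (p t.succ) * g (p t.succ) (y ((t : ℕ) + 1)))) *
          s (p ⟨k+1, h1⟩) (p ⟨k+1+1, h2⟩)) (Fin.cons xp.1 xp.2))
      _ (fun xp => rfl)]
    rw [Fintype.sum_prod_type]
    have hk1 : k < M' + 2 := by omega
    have hk2 : k + 1 < M' + 2 := by omega
    have inner : ∀ x0 : S,
        (∑ p' : Fin (M'+2) → S,
          φ ((Fin.cons x0 p' : Fin (M'+3) → S) 0) *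
          (∏ t : Fin (M'+2), (q ((Fin.cons x0 p' : Fin (M'+3) → S) t.castSucc)
            ((Fin.cons x0 p' : Fin (M'+3) → S) t.succ) *
            g ((Fin.cons x0 p' : Fin (M'+3) → S) t.succ) (y ((t : ℕ) + 1)))) *
          s ((Fin.cons x0 p' : Fin (M'+3) → S) ⟨k+1, h1⟩)
            ((Fin.cons x0 p' : Fin (M'+3) → S) ⟨k+1+1, h2⟩))
        = ∑ z : S, (φ x0 * (q x0 z * g z (y 1))) * Bs q g s k r (fun i => y (i+1)) z := by
      intro x0
      rw [← ih r M' (by omega) (fun i => y (i+1)) (fun z => φ x0 * (q x0 z * g z (y 1))) hk1 hk2]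
      refine Finset.sum_congr rfl fun p' _ => ?_
      have e0 : (⟨k+1, h1⟩ : Fin (M'+3)) = (⟨k, hk1⟩ : Fin (M'+2)).succ := rfl
      have e1 : (⟨k+1+1, h2⟩ : Fin (M'+3)) = (⟨k+1, hk2⟩ : Fin (M'+2)).succ := rfl
      rw [e0, e1, Fin.prod_univ_succ]
      simp only [← Fin.succ_castSucc, Fin.cons_succ, Fin.cons_zero, Fin.castSucc_zero,
        Fin.val_succ, Fin.val_zero]
      ring
    rw [Finset.sum_congr rfl fun x0 _ => inner x0]
    simp only [Bs, Finset.mul_sum]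
    refine Finset.sum_congr rfl fun x0 _ => Finset.sum_congr rfl fun z _ => by ring

lemma Bfun_succ (q : S → S → ℝ) (g : S → Y → ℝ) (m : ℕ) (y : ℕ → Y) (x : S) :
    Bfun q g (m+1) y x = ∑ x' : S, q x x' * g x' (y 1) * Bfun q g m (fun i => y (i+1)) x' := rfl

lemma Bs_zero (q : S → S → ℝ) (g : S → Y → ℝ) (s : S → S → ℝ) (r : ℕ) (y : ℕ → Y) (x : S) :
    Bs q g s 0 r y x
      = ∑ x' : S, q x x' * g x' (y 1) * s x x' * Bfun q g r (fun i => y (i+1)) x' := rfl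

lemma Bs_succ (q : S → S → ℝ) (g : S → Y → ℝ) (s : S → S → ℝ) (k r : ℕ) (y : ℕ → Y) (x : S) :
    Bs q g s (k+1) r y x
      = ∑ x' : S, q x x' * g x' (y 1) * Bs q g s k r (fun i => y (i+1)) x' := rfl

lemma Bfun_pos (q : S → S → ℝ) (g : S → Y → ℝ) (ε : ℝ) (hε : 0 < ε)
    (hq : ∀ x x', ε ≤ q x x') (hg : ∀ x yy, 0 < g x yy) :
    ∀ (m : ℕ) (y : ℕ → Y) (x : S), 0 < Bfun q g m y x := by
  intro m
  induction m with
  | zero => intro y x; simp [Bfun]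
  | succ m ih =>
    intro y x
    rw [Bfun_succ]
    refine Finset.sum_pos (fun x' _ => ?_) ⟨Classical.arbitrary S, Finset.mem_univ _⟩
    exact mul_pos (mul_pos (lt_of_lt_of_le hε (hq x x')) (hg _ _)) (ih _ _)

lemma Bs_abs (q : S → S → ℝ) (g : S → Y → ℝ) (s : S → S → ℝ) (ε : ℝ) (hε : 0 < ε)
    (hq : ∀ x x', ε ≤ q x x') (hg : ∀ x yy, 0 < g x yy) (C : ℝ) (hC : ∀ a b, |s a b| ≤ C) :
    ∀ (k r : ℕ) (y : ℕ → Y) (x : S), |Bs q g s k r y x| ≤ C * Bfun q g (k+r+1) y x := by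
  have hq0 : ∀ x x', 0 ≤ q x x' := fun x x' => le_trans hε.le (hq x x')
  intro k
  induction k with
  | zero =>
    intro r y x
    rw [Bs_zero, show 0+r+1 = r+1 by omega, Bfun_succ, Finset.mul_sum]
    refine le_trans (Finset.abs_sum_le_sum_abs _ _) (Finset.sum_le_sum fun z _ => ?_)
    rw [abs_mul, abs_mul, abs_mul, abs_of_nonneg (hq0 x z), abs_of_nonneg (hg z _).le,
      abs_of_nonneg (Bfun_pos q g ε hε hq hg _ _ _).le]
    calc q x z * g z (y 1) * |s x z| * Bfun q g r (fun i => y (i+1)) z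
        ≤ q x z * g z (y 1) * C * Bfun q g r (fun i => y (i+1)) z := by
          have h1 : 0 ≤ q x z * g z (y 1) := mul_nonneg (hq0 x z) (hg z _).le
          have h2 : (0:ℝ) ≤ Bfun q g r (fun i => y (i+1)) z :=
            (Bfun_pos q g ε hε hq hg _ _ _).le
          exact mul_le_mul_of_nonneg_right (mul_le_mul_of_nonneg_left (hC x z) h1) h2
      _ = C * (q x z * g z (y 1) * Bfun q g r (fun i => y (i+1)) z) := by ring
  | succ k ih =>
    intro r y x
    rw [Bs_succ, show k+1+r+1 = (k+r+1)+1 by omega, Bfun_succ, Finset.mul_sum]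
    refine le_trans (Finset.abs_sum_le_sum_abs _ _) (Finset.sum_le_sum fun z _ => ?_)
    rw [abs_mul, abs_mul, abs_of_nonneg (hq0 x z), abs_of_nonneg (hg z _).le]
    calc q x z * g z (y 1) * |Bs q g s k r (fun i => y (i+1)) z|
        ≤ q x z * g z (y 1) * (C * Bfun q g (k+r+1) (fun i => y (i+1)) z) := by
          have h1 : 0 ≤ q x z * g z (y 1) := mul_nonneg (hq0 x z) (hg z _).le
          exact mul_le_mul_of_nonneg_left (ih r _ z) h1
      _ = C * (q x z * g z (y 1) * Bfun q g (k+r+1) (fun i => y (i+1)) z) := by ring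

lemma dobrushin (K1 K2 μ f : S → ℝ) (ε D : ℝ) (hD : 0 ≤ D)
    (h1 : ∀ z, ε * μ z ≤ K1 z) (h2 : ∀ z, ε * μ z ≤ K2 z)
    (hs1 : ∑ z, K1 z = 1) (hs2 : ∑ z, K2 z = 1) (hsμ : ∑ z, μ z = 1)
    (hf : ∀ a b, |f a - f b| ≤ D) :
    |(∑ z, K1 z * f z) - (∑ z, K2 z * f z)| ≤ (1 - ε) * D := by
  obtain ⟨a0, -, hmin⟩ := Finset.exists_min_image Finset.univ f
    ⟨Classical.arbitrary S, Finset.mem_univ _⟩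
  set c := f a0 with hc
  have expand : ∀ K : S → ℝ, ∑ z, (K z - ε * μ z) * (f z - c)
      = (∑ z, K z * f z) - ε * (∑ z, μ z * f z) - c * (∑ z, K z) + c * ε * (∑ z, μ z) := by
    intro K
    rw [Finset.mul_sum, Finset.mul_sum, Finset.mul_sum, ← Finset.sum_sub_distrib,
      ← Finset.sum_sub_distrib, ← Finset.sum_add_distrib]
    exact Finset.sum_congr rfl fun z _ => by ring
  have e1 : (∑ z, K1 z * f z) - (∑ z, K2 z * f z)
      = (∑ z, (K1 z - ε * μ z) * (f z - c)) - (∑ z, (K2 z - ε * μ z) * (f z - c)) := by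
    rw [expand K1, expand K2, hs1, hs2, hsμ]; ring
  have bnd : ∀ K : S → ℝ, (∀ z, ε * μ z ≤ K z) → (∑ z, K z = 1) →
      0 ≤ (∑ z, (K z - ε * μ z) * (f z - c)) ∧
      (∑ z, (K z - ε * μ z) * (f z - c)) ≤ (1 - ε) * D := by
    intro K hK hKs
    constructor
    · refine Finset.sum_nonneg fun z _ => mul_nonneg (by linarith [hK z]) ?_
      have := hmin z (Finset.mem_univ z); linarith
    · calc (∑ z, (K z - ε * μ z) * (f z - c))
          ≤ ∑ z, (K z - ε * μ z) * D := by
            refine Finset.sum_le_sum fun z _ => mul_le_mul_of_nonneg_left ?_ (by linarith [hK z])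
            have := abs_le.1 (hf z a0); linarith [this.2]
        _ = (1 - ε) * D := by
            rw [← Finset.sum_mul, Finset.sum_sub_distrib, hKs, ← Finset.mul_sum, hsμ, mul_one]
  obtain ⟨b10, b11⟩ := bnd K1 h1 hs1
  obtain ⟨b20, b21⟩ := bnd K2 h2 hs2
  rw [e1, abs_sub_le_iff]
  constructor <;> linarith

theorem KL (q : S → S → ℝ) (g : S → Y → ℝ) (s : S → S → ℝ) (ε : ℝ) (hε : 0 < ε)
    (hq : ∀ x x', ε ≤ q x x') (hqs : ∀ x, ∑ x', q x x' = 1) (hg : ∀ x yy, 0 < g x yy)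
    (C : ℝ) (hC : ∀ a b, |s a b| ≤ C) :
    ∀ (k r : ℕ) (y : ℕ → Y) (a b : S),
    |Bs q g s k r y a / Bfun q g (k+r+1) y a - Bs q g s k r y b / Bfun q g (k+r+1) y b|
      ≤ 2 * C * (1-ε)^k := by
  have hq0 : ∀ x x', 0 ≤ q x x' := fun x x' => le_trans hε.le (hq x x')
  have hq1 : ∀ x x', q x x' ≤ 1 := by
    intro x x'
    rw [← hqs x]
    exact Finset.single_le_sum (fun z _ => hq0 x z) (Finset.mem_univ x')
  have hε1 : ε ≤ 1 :=
    le_trans (hq (Classical.arbitrary S) (Classical.arbitrary S)) (hq1 _ _)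
  have hC0 : 0 ≤ C := le_trans (abs_nonneg _) (hC (Classical.arbitrary S) (Classical.arbitrary S))
  have hBp : ∀ (m : ℕ) (y : ℕ → Y) (x : S), 0 < Bfun q g m y x := Bfun_pos q g ε hε hq hg
  intro k
  induction k with
  | zero =>
    intro r y a b
    have habs : ∀ x : S, |Bs q g s 0 r y x / Bfun q g (0+r+1) y x| ≤ C := by
      intro x
      rw [abs_div, abs_of_nonneg (hBp _ _ _).le, div_le_iff₀ (hBp _ _ _)]
      exact Bs_abs q g s ε hε hq hg C hC 0 r y x
    calc |Bs q g s 0 r y a / Bfun q g (0+r+1) y a - Bs q g s 0 r y b / Bfun q g (0+r+1) y b|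
        ≤ |Bs q g s 0 r y a / Bfun q g (0+r+1) y a| +
          |Bs q g s 0 r y b / Bfun q g (0+r+1) y b| := abs_sub _ _
      _ ≤ C + C := add_le_add (habs a) (habs b)
      _ = 2 * C * (1-ε)^0 := by ring
  | succ k ih =>
    intro r y a b
    set y' : ℕ → Y := fun i => y (i+1) with hy'
    set B : S → ℝ := fun z => Bfun q g (k+r+1) y' z with hB
    set βf : S → ℝ := fun x => Bfun q g (k+1+r+1) y x with hβf
    have hβ : ∀ x, βf x = ∑ z, q x z * g z (y 1) * B z := by
      intro x
      show Bfun q g (k+1+r+1) y x = _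
      rw [show k+1+r+1 = (k+r+1)+1 by omega, Bfun_succ]
    have hBpos : ∀ z, 0 < B z := fun z => hBp _ _ _
    have hβpos : ∀ x, 0 < βf x := fun x => hBp _ _ _
    set T : ℝ := ∑ z, g z (y 1) * B z with hT
    have hTpos : 0 < T := by
      refine Finset.sum_pos (fun z _ => mul_pos (hg _ _) (hBpos z))
        ⟨Classical.arbitrary S, Finset.mem_univ _⟩
    set K : S → S → ℝ := fun x z => q x z * g z (y 1) * B z / βf x with hK
    set μ : S → ℝ := fun z => g z (y 1) * B z / T with hμ
    set f : S → ℝ := fun z => Bs q g s k r y' z / B z with hf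
    have hrepr : ∀ x, Bs q g s (k+1) r y x / βf x = ∑ z, K x z * f z := by
      intro x
      rw [Bs_succ, Finset.sum_div]
      refine Finset.sum_congr rfl fun z _ => ?_
      show q x z * g z (y 1) * Bs q g s k r y' z / βf x
        = (q x z * g z (y 1) * B z / βf x) * (Bs q g s k r y' z / B z)
      rw [div_mul_div_comm,
        show q x z * g z (y 1) * B z * Bs q g s k r y' z
          = (q x z * g z (y 1) * Bs q g s k r y' z) * B z by ring,
        mul_div_mul_right _ _ (hBpos z).ne']
    have hKs : ∀ x, ∑ z, K x z = 1 := by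
      intro x
      rw [show ∑ z, K x z = (∑ z, q x z * g z (y 1) * B z) / βf x from Finset.sum_div .. |>.symm,
        ← hβ x, div_self (hβpos x).ne']
    have hμs : ∑ z, μ z = 1 := by
      rw [show ∑ z, μ z = (∑ z, g z (y 1) * B z) / T from Finset.sum_div .. |>.symm,
        ← hT, div_self hTpos.ne']
    have hβT : ∀ x, βf x ≤ T := by
      intro x
      rw [hβ x, hT]
      refine Finset.sum_le_sum fun z _ => ?_
      have h2 : 0 ≤ g z (y 1) * B z := mul_nonneg (hg _ _).le (hBpos z).le
      calc q x z * g z (y 1) * B z = q x z * (g z (y 1) * B z) := by ring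
        _ ≤ 1 * (g z (y 1) * B z) := mul_le_mul_of_nonneg_right (hq1 x z) h2
        _ = g z (y 1) * B z := one_mul _
    have hKμ : ∀ x z, ε * μ z ≤ K x z := by
      intro x z
      show ε * (g z (y 1) * B z / T) ≤ q x z * g z (y 1) * B z / βf x
      rw [show ε * (g z (y 1) * B z / T) = ε * (g z (y 1) * B z) / T by ring]
      refine div_le_div₀ (mul_nonneg (mul_nonneg (hq0 x z) (hg _ _).le) (hBpos z).le) ?_
        (hβpos x) (hβT x)
      calc ε * (g z (y 1) * B z) ≤ q x z * (g z (y 1) * B z) :=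
            mul_le_mul_of_nonneg_right (hq x z) (mul_nonneg (hg _ _).le (hBpos z).le)
        _ = q x z * g z (y 1) * B z := by ring
    have hfp : ∀ a b : S, |f a - f b| ≤ 2 * C * (1-ε)^k := fun a b => ih r y' a b
    have hD0 : 0 ≤ 2 * C * (1-ε)^k :=
      mul_nonneg (by linarith) (pow_nonneg (by linarith) _)
    have hdob := dobrushin (K a) (K b) μ f ε (2 * C * (1-ε)^k) hD0
      (hKμ a) (hKμ b) (hKs a) (hKs b) hμs hfp
    calc |Bs q g s (k+1) r y a / Bfun q g (k+1+r+1) y a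
          - Bs q g s (k+1) r y b / Bfun q g (k+1+r+1) y b|
        = |(∑ z, K a z * f z) - (∑ z, K b z * f z)| := by rw [← hrepr a, ← hrepr b]
      _ ≤ (1 - ε) * (2 * C * (1-ε)^k) := hdob
      _ = 2 * C * (1-ε)^(k+1) := by ring

lemma avg_diff (w w' ρ : S → ℝ) (hw : ∀ x, 0 ≤ w x) (hw' : ∀ x, 0 ≤ w' x)
    (hws : ∑ x, w x = 1) (hw's : ∑ x, w' x = 1) (D : ℝ)
    (hρ : ∀ a b, |ρ a - ρ b| ≤ D) :
    |(∑ x, w x * ρ x) - (∑ x, w' x * ρ x)| ≤ D := by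
  have diff_eq : (∑ x, w x * ρ x) - (∑ x, w' x * ρ x)
      = ∑ a, ∑ b, w a * w' b * (ρ a - ρ b) := by
    have h1 : ∑ a, ∑ b, w a * w' b * (ρ a - ρ b)
        = (∑ a, (w a * ρ a)) * (∑ b, w' b) - (∑ a, w a) * (∑ b, (w' b * ρ b)) := by
      rw [Finset.sum_mul_sum, Finset.sum_mul_sum, ← Finset.sum_sub_distrib]
      refine Finset.sum_congr rfl fun a _ => ?_
      rw [← Finset.sum_sub_distrib]
      exact Finset.sum_congr rfl fun b _ => by ring
    rw [h1, hws, hw's]; ring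
  rw [diff_eq]
  calc |∑ a, ∑ b, w a * w' b * (ρ a - ρ b)|
      ≤ ∑ a, |∑ b, w a * w' b * (ρ a - ρ b)| := Finset.abs_sum_le_sum_abs _ _
    _ ≤ ∑ a, ∑ b, |w a * w' b * (ρ a - ρ b)| :=
        Finset.sum_le_sum fun a _ => Finset.abs_sum_le_sum_abs _ _
    _ ≤ ∑ a, ∑ b, w a * w' b * D := by
        refine Finset.sum_le_sum fun a _ => Finset.sum_le_sum fun b _ => ?_
        rw [abs_mul, abs_of_nonneg (mul_nonneg (hw a) (hw' b))]
        exact mul_le_mul_of_nonneg_left (hρ a b) (mul_nonneg (hw a) (hw' b))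
    _ = ((∑ a, w a) * (∑ b, w' b)) * D := by
        rw [Finset.sum_mul_sum, Finset.sum_mul]
        exact Finset.sum_congr rfl fun a _ => by rw [Finset.sum_mul]
    _ = D := by rw [hws, hw's]; ring

end Aux

/-- Geometric decay of the dependence on the initial law of finite-horizon smoothed
expectations: with horizon `2n` and the queried pair at the midpoint `t = n`,
`|E_ν[s(X_{n-1}, X_n) | Y_{0:2n}] - E_{ν'}[s(X_{n-1}, X_n) | Y_{0:2n}]|
  ≤ (2/ε) (1-ε)^{n-1} ‖s‖_∞`. -/
theorem stmt19 {S Y : Type*} [Fintype S] [DecidableEq S] [Nonempty S]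
    (q : S → S → ℝ) (g : S → Y → ℝ) (y : ℕ → Y) (ε : ℝ) (hε : 0 < ε)
    (hq : ∀ x x', ε ≤ q x x') (hqs : ∀ x, ∑ x', q x x' = 1)
    (hg : ∀ x yy, 0 < g x yy)
    (ν ν' : S → ℝ) (hν : ∀ x, 0 < ν x) (hνs : ∑ x, ν x = 1)
    (hν' : ∀ x, 0 < ν' x) (hν's : ∑ x, ν' x = 1)
    (s : S → S → ℝ) (C : ℝ) (hC : ∀ a b, |s a b| ≤ C)
    (n : ℕ) (hn : 1 ≤ n) :
    |(∑ p : Fin (2 * n + 1) → S,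
          hmmWeight ν q g y (2 * n) p * s (p ⟨n - 1, by omega⟩) (p ⟨n, by omega⟩)) /
        (∑ p : Fin (2 * n + 1) → S, hmmWeight ν q g y (2 * n) p) -
      (∑ p : Fin (2 * n + 1) → S,
          hmmWeight ν' q g y (2 * n) p * s (p ⟨n - 1, by omega⟩) (p ⟨n, by omega⟩)) /
        (∑ p : Fin (2 * n + 1) → S, hmmWeight ν' q g y (2 * n) p)|
      ≤ (2 / ε) * (1 - ε) ^ (n - 1) * C := by
  obtain ⟨m, rfl⟩ : ∃ m, n = m + 1 := ⟨n - 1, by omega⟩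
  have hq0 : ∀ x x', 0 ≤ q x x' := fun x x' => le_trans hε.le (hq x x')
  have hq1 : ∀ x x', q x x' ≤ 1 := by
    intro x x'
    rw [← hqs x]
    exact Finset.single_le_sum (fun z _ => hq0 x z) (Finset.mem_univ x')
  have hε1 : ε ≤ 1 :=
    le_trans (hq (Classical.arbitrary S) (Classical.arbitrary S)) (hq1 _ _)
  have hC0 : 0 ≤ C := le_trans (abs_nonneg _) (hC (Classical.arbitrary S) (Classical.arbitrary S))
  have hBp : ∀ (k : ℕ) (yy : ℕ → Y) (x : S), 0 < Bfun q g k yy x := Bfun_pos q g ε hε hq hg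
  set φ1 : S → ℝ := fun x => ν x * g x (y 0) with hφ1
  set φ2 : S → ℝ := fun x => ν' x * g x (y 0) with hφ2
  have hnum1 : (∑ p : Fin (2*(m+1)+1) → S,
      hmmWeight ν q g y (2*(m+1)) p * s (p ⟨m+1-1, by omega⟩) (p ⟨m+1, by omega⟩))
      = ∑ x, φ1 x * Bs q g s m (m+1) y x :=
    lemQ q g s m (m+1) (2*m+1) (by omega) y φ1 (by omega) (by omega)
  have hnum2 : (∑ p : Fin (2*(m+1)+1) → S,
      hmmWeight ν' q g y (2*(m+1)) p * s (p ⟨m+1-1, by omega⟩) (p ⟨m+1, by omega⟩))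
      = ∑ x, φ2 x * Bs q g s m (m+1) y x :=
    lemQ q g s m (m+1) (2*m+1) (by omega) y φ2 (by omega) (by omega)
  have hden1 : (∑ p : Fin (2*(m+1)+1) → S, hmmWeight ν q g y (2*(m+1)) p)
      = ∑ x, φ1 x * Bfun q g (2*(m+1)) y x := lemP q g (2*(m+1)) y φ1
  have hden2 : (∑ p : Fin (2*(m+1)+1) → S, hmmWeight ν' q g y (2*(m+1)) p)
      = ∑ x, φ2 x * Bfun q g (2*(m+1)) y x := lemP q g (2*(m+1)) y φ2
  rw [hnum1, hnum2, hden1, hden2]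
  set BB : S → ℝ := fun x => Bfun q g (2*(m+1)) y x with hBB
  set ρ : S → ℝ := fun x => Bs q g s m (m+1) y x / BB x with hρ
  have hBBpos : ∀ x, 0 < BB x := fun x => hBp _ _ x
  have hKL : ∀ a b : S, |ρ a - ρ b| ≤ 2*C*(1-ε)^m := by
    intro a b
    have := KL q g s ε hε hq hqs hg C hC m (m+1) y a b
    rw [show m+(m+1)+1 = 2*(m+1) by ring] at this
    exact this
  have hconv : ∀ (φ : S → ℝ), (∀ x, 0 < φ x) →
      (∑ x, φ x * Bs q g s m (m+1) y x) / (∑ x, φ x * BB x)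
      = ∑ x, (φ x * BB x / (∑ x', φ x' * BB x')) * ρ x := by
    intro φ hφ
    rw [Finset.sum_div]
    refine Finset.sum_congr rfl fun x _ => ?_
    rw [hρ]
    rw [div_mul_div_comm,
      show φ x * BB x * Bs q g s m (m+1) y x
        = (φ x * Bs q g s m (m+1) y x) * BB x by ring,
      mul_div_mul_right _ _ (hBBpos x).ne']
  have hwfacts : ∀ (φ : S → ℝ), (∀ x, 0 < φ x) →
      (∀ x, 0 ≤ φ x * BB x / (∑ x', φ x' * BB x')) ∧
      (∑ x, φ x * BB x / (∑ x', φ x' * BB x')) = 1 := by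
    intro φ hφ
    have hD : 0 < ∑ x', φ x' * BB x' :=
      Finset.sum_pos (fun x _ => mul_pos (hφ x) (hBBpos x))
        ⟨Classical.arbitrary S, Finset.mem_univ _⟩
    exact ⟨fun x => div_nonneg (mul_nonneg (hφ x).le (hBBpos x).le) hD.le,
      by rw [← Finset.sum_div, div_self hD.ne']⟩
  have hφ1p : ∀ x, 0 < φ1 x := fun x => mul_pos (hν x) (hg x _)
  have hφ2p : ∀ x, 0 < φ2 x := fun x => mul_pos (hν' x) (hg x _)
  rw [hconv φ1 hφ1p, hconv φ2 hφ2p]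
  obtain ⟨hw1, hw1s⟩ := hwfacts φ1 hφ1p
  obtain ⟨hw2, hw2s⟩ := hwfacts φ2 hφ2p
  have hbound := avg_diff (fun x => φ1 x * BB x / (∑ x', φ1 x' * BB x'))
    (fun x => φ2 x * BB x / (∑ x', φ2 x' * BB x')) ρ hw1 hw2 hw1s hw2s
    (2*C*(1-ε)^m) hKL
  refine le_trans hbound ?_
  simp only [Nat.add_sub_cancel]
  have hP : (0:ℝ) ≤ (1-ε)^m := pow_nonneg (by linarith) _
  have h2ε : 2 ≤ 2/ε := by rw [le_div_iff₀ hε]; nlinarith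
  nlinarith [mul_nonneg hP hC0]
end
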